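/- In the simplicial setup, let N₀ ⊂ N₁ ∪ N₂ be a subset obtained by repeatedly removing any element divisible by another element, so that no element of N₀ divides another and N₀ still generates in_≺(ker π); for n = x^μ y^ν ∈ N₀ with associated b = Σμ_[i]a_i + Σν_[i]e_i ∈ B, set g_n := n − m_b. Then G = {g_n : n ∈ N₀} is the reduced Gröbner basis of ker π with respect to the graded reverse lexicographic order: G is a Gröbner basis, each initial term has coefficient 1, and for every g ∈ G no term of any g' ∈ G \ {g} is divisible by in_≺(g). -/

import Mathlib

namespace SimplicialToric

/-- `eVec d α i` is `α` times the `i`-th standard basis vector of `ℕ^d`. -/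
def eVec (d α : ℕ) (i : Fin d) : Fin d → ℕ := fun j => if j = i then α else 0

/-- The Hilbert basis of a submonoid `B ⊆ ℕ^d`: the set of irreducible elements
(in `ℕ^d` the only unit is `0`). -/
def Hilb {d : ℕ} (B : AddSubmonoid (Fin d → ℕ)) : Set (Fin d → ℕ) :=
  {b | b ∈ B ∧ b ≠ 0 ∧ ∀ x ∈ B, ∀ y ∈ B, b = x + y → x = 0 ∨ y = 0}

/-- The submonoid `A = Σᵢ ℤ≥0·eᵢ = αℤ≥0^d`. -/
def Amon (d α : ℕ) : AddSubmonoid (Fin d → ℕ) :=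
  AddSubmonoid.closure (Set.range (eVec d α))

/-- `B_A = {x ∈ B : x − a ∉ B for every a ∈ A \ {0}}`. -/
def BA {d : ℕ} (B : AddSubmonoid (Fin d → ℕ)) (α : ℕ) : Set (Fin d → ℕ) :=
  {x | x ∈ B ∧ ∀ z ∈ Amon d α, z ≠ 0 → ∀ y ∈ B, x ≠ y + z}

/-- The generators `a₁,…,a_c,e₁,…,e_d` of `B`, indexed by the variables of
`S = K[x₁,…,x_c,y₁,…,y_d]`; variable `Fin.castAdd d i` is `xᵢ`, variable
`Fin.natAdd c j` is `yⱼ`. -/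
def gens (c d α : ℕ) (a : Fin c → Fin d → ℕ) : Fin (c + d) → Fin d → ℕ :=
  Fin.addCases a (eVec d α)

/-- The element of `B` represented by the monomial with exponent vector `σ`:
`π(x^μ y^ν) = t^(valE σ)`. -/
def valE (c d α : ℕ) (a : Fin c → Fin d → ℕ) (σ : Fin (c + d) →₀ ℕ) : Fin d → ℕ :=
  ∑ v : Fin (c + d), σ v • gens c d α a v

/-- total degree of a monomial (exponent vector). -/
def degE {N : ℕ} (σ : Fin N →₀ ℕ) : ℕ := ∑ v, σ v

/-- the graded reverse lexicographic order: `grevlex σ τ` means `σ ≺ τ`,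
i.e. `deg σ < deg τ`, or degrees agree and the last nonzero entry of `τ − σ`
is negative. -/
def grevlex {N : ℕ} (σ τ : Fin N →₀ ℕ) : Prop :=
  degE σ < degE τ ∨ (degE σ = degE τ ∧ ∃ k, τ k < σ k ∧ ∀ l, k < l → σ l = τ l)

/-- `x ∼ y` iff `x − y ∈ gp(A) = αℤ^d`. -/
def Rel {d : ℕ} (α : ℕ) (x y : Fin d → ℕ) : Prop :=
  ∀ j, (α : ℤ) ∣ (x j : ℤ) - (y j : ℤ)

/-- `Γ` is an equivalence class of `B_A` modulo `αℤ^d`. -/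
def IsClass {d : ℕ} (B : AddSubmonoid (Fin d → ℕ)) (α : ℕ) (Γ : Set (Fin d → ℕ)) : Prop :=
  ∃ x ∈ BA B α, Γ = {y | y ∈ BA B α ∧ Rel α x y}

/-- the total order on an equivalence class of `B_A`: `b ≺ c` iff the last
nonzero entry of `b − c` is negative. -/
def ltCls {d : ℕ} (x y : Fin d → ℕ) : Prop :=
  ∃ k, x k < y k ∧ ∀ l, k < l → x l = y l

/-- `joinSub x y = x∨y − y`, where `x∨y` is the componentwise maximum. -/
def joinSub {d : ℕ} (x y : Fin d → ℕ) : Fin d → ℕ := fun j => max (x j) (y j) - y j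

/-- the monomial with exponents `σ` lies in `T = K[y₁,…,y_d]`. -/
def yOnly (c d : ℕ) (σ : Fin (c + d) →₀ ℕ) : Prop := ∀ i : Fin c, σ (Fin.castAdd d i) = 0

/-- the monomial with exponents `σ` involves only the `x`-variables. -/
def xOnly (c d : ℕ) (σ : Fin (c + d) →₀ ℕ) : Prop := ∀ j : Fin d, σ (Fin.natAdd c j) = 0

/-- the set `N₁`, for a given choice `m` of the minimal monomials `m_b`. -/
def N1set (c d α : ℕ) (a : Fin c → Fin d → ℕ) (B : AddSubmonoid (Fin d → ℕ))
    (m : (Fin d → ℕ) → (Fin (c + d) →₀ ℕ)) : Set (Fin (c + d) →₀ ℕ) :=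
  {n | ∃ (i : Fin c) (b : Fin d → ℕ), b ∈ BA B α ∧
    n = Finsupp.single (Fin.castAdd d i) 1 + m b ∧ n ≠ m (a i + b)}

/-- the set `N₂ = ∪_Γ N_Γ`, where `N_Γ = {n(bᵢ,bⱼ) = m_{bⱼ}·m_{bᵢ∨bⱼ−bⱼ} : bᵢ ≺ bⱼ in Γ}`. -/
def N2set {d : ℕ} (c α : ℕ) (B : AddSubmonoid (Fin d → ℕ))
    (m : (Fin d → ℕ) → (Fin (c + d) →₀ ℕ)) : Set (Fin (c + d) →₀ ℕ) :=
  {n | ∃ Γ, IsClass B α Γ ∧ ∃ bi ∈ Γ, ∃ bj ∈ Γ, ltCls bi bj ∧ n = m bj + m (joinSub bi bj)}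

/-- `σ` is the exponent vector of the initial (i.e. `≺`-largest) term of `f`. -/
def IsLeadMon {N : ℕ} {K : Type*} [Field K] (f : MvPolynomial (Fin N) K)
    (σ : Fin N →₀ ℕ) : Prop :=
  σ ∈ f.support ∧ ∀ τ ∈ f.support, τ = σ ∨ grevlex τ σ

/-- the initial ideal of `I` with respect to the graded reverse lexicographic order. -/
noncomputable def initialIdeal {N : ℕ} {K : Type*} [Field K] (I : Ideal (MvPolynomial (Fin N) K)) :
    Ideal (MvPolynomial (Fin N) K) :=
  Ideal.span {g | ∃ f ∈ I, ∃ σ, IsLeadMon f σ ∧ g = MvPolynomial.monomial σ (1 : K)}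

end SimplicialToric

/-!
The binomial `g_n = n - m_b` lies in `ker π` because both monomials map to `t^b`, and its initial
term is `n` because `n` lies in `in_≺(ker π)` while `m_b` does not: a polynomial in `ker π`
cancels its initial term against a smaller term of the same weight, so every monomial of the
initial ideal has a `≺`-smaller monomial in its fibre. Hence the initial terms of the `g_n` are
exactly `N₀`, which generates `in_≺(ker π)`. Reducedness: a term of `g_{n'}` divisible by `n` is
either `n'` (excluded since `N₀` is an antichain) or `m_{b'}`, which would then lie in the
initial ideal.
-/

namespace SimplicialToric

open MvPolynomial

section Grevlex

variable {N : ℕ}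

lemma degE_add (σ τ : Fin N →₀ ℕ) : degE (σ + τ) = degE σ + degE τ := by
  simp [degE, Finset.sum_add_distrib]

lemma grevlex_asymm {σ τ : Fin N →₀ ℕ} (h : grevlex σ τ) (h' : grevlex τ σ) : False := by
  rcases h with h | ⟨hd, k, hk, hl⟩
  · rcases h' with h' | ⟨hd', _⟩ <;> omega
  · rcases h' with h' | ⟨hd', k', hk', hl'⟩
    · omega
    · rcases lt_trichotomy k k' with h1 | rfl | h1
      · have := hl k' h1; omega
      · omega
      · have := hl' k h1; omega

lemma grevlex_irrefl (σ : Fin N →₀ ℕ) : ¬ grevlex σ σ := fun h => grevlex_asymm h h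

lemma grevlex.ne {σ τ : Fin N →₀ ℕ} (h : grevlex σ τ) : σ ≠ τ :=
  fun he => grevlex_irrefl τ (he ▸ h)

lemma grevlex_add_right {σ τ : Fin N →₀ ℕ} (h : grevlex σ τ) (ρ : Fin N →₀ ℕ) :
    grevlex (σ + ρ) (τ + ρ) := by
  rcases h with h | ⟨hd, k, hk, hl⟩
  · left; rw [degE_add, degE_add]; omega
  · right
    refine ⟨by rw [degE_add, degE_add, hd], k, by simp only [Finsupp.add_apply]; omega,
      fun l hl' => by simp only [Finsupp.add_apply]; rw [hl l hl']⟩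

variable {K : Type*} [Field K]

lemma IsLeadMon.unique {f : MvPolynomial (Fin N) K} {σ σ' : Fin N →₀ ℕ}
    (h : IsLeadMon f σ) (h' : IsLeadMon f σ') : σ = σ' := by
  rcases h'.2 σ h.1 with rfl | hlt
  · rfl
  · rcases h.2 σ' h'.1 with rfl | hgt
    · rfl
    · exact (grevlex_asymm hlt hgt).elim

lemma mem_support_monomial_sub_monomial {ν μ τ : Fin N →₀ ℕ} (r s : K)
    (hτ : τ ∈ (monomial ν r - monomial μ s).support) : τ = ν ∨ τ = μ := by
  classical
  have := support_sub (Fin N) _ _ hτ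
  simp only [Finset.mem_union] at this
  exact this.imp (fun h => Finset.mem_singleton.mp (support_monomial_subset h))
    (fun h => Finset.mem_singleton.mp (support_monomial_subset h))

lemma coeff_monomial_sub_monomial_self {ν μ : Fin N →₀ ℕ} (h : μ ≠ ν) :
    coeff ν (monomial ν (1 : K) - monomial μ 1) = 1 := by
  rw [coeff_sub, coeff_monomial, coeff_monomial, if_pos rfl, if_neg h, sub_zero]

lemma isLeadMon_monomial_sub_monomial {ν μ : Fin N →₀ ℕ} (h : grevlex μ ν) :
    IsLeadMon (monomial ν (1 : K) - monomial μ 1) ν := by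
  refine ⟨?_, fun τ hτ => ?_⟩
  · rw [mem_support_iff, coeff_monomial_sub_monomial_self h.ne]
    exact one_ne_zero
  · rcases mem_support_monomial_sub_monomial 1 1 hτ with rfl | rfl
    · exact Or.inl rfl
    · exact Or.inr h

end Grevlex

lemma monomial_add_mem {ι R : Type*} [CommSemiring R] {I : Ideal (MvPolynomial ι R)}
    {n : ι →₀ ℕ} (h : monomial n (1 : R) ∈ I) (ρ : ι →₀ ℕ) : monomial (n + ρ) (1 : R) ∈ I := by
  rw [← one_mul (1 : R), ← monomial_mul]
  exact I.mul_mem_right _ h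

section Weight

variable {ι K M : Type*} [Fintype ι] [Field K] [AddCommMonoid M] {g : ι → M}
  {π : MvPolynomial ι K →ₐ[K] AddMonoidAlgebra K M}

lemma map_monomial_of_map_X (hπ : ∀ v, π (X v) = AddMonoidAlgebra.of' K M (g v))
    (σ : ι →₀ ℕ) (r : K) :
    π (monomial σ r) = AddMonoidAlgebra.single (∑ v, σ v • g v) r := by
  classical
  induction σ using Finsupp.induction with
  | zero =>
    rw [monomial_zero', ← algebraMap_eq, AlgHom.commutes]
    simp
  | single_add v k τ _ _ ih =>
    rw [← one_mul r, ← monomial_mul, map_mul, ih, ← X_pow_eq_monomial, map_pow, hπ,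
      AddMonoidAlgebra.of'_apply, AddMonoidAlgebra.single_pow, AddMonoidAlgebra.single_mul_single,
      one_pow]
    simp [add_smul, Finset.sum_add_distrib, Finsupp.single_apply]

/-- Otherwise the coefficient of `t^{w(σ)}` in `π f = ∑_τ f_τ t^{w(τ)}` would be `f_σ ≠ 0`. -/
lemma exists_ne_mem_support_weight_eq (hπ : ∀ v, π (X v) = AddMonoidAlgebra.of' K M (g v))
    {f : MvPolynomial ι K} (hf : π f = 0) {σ : ι →₀ ℕ} (hσ : σ ∈ f.support) :
    ∃ τ ∈ f.support, τ ≠ σ ∧ ∑ v, τ v • g v = ∑ v, σ v • g v := by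
  classical
  by_contra! hcon
  have hsum : ∑ τ ∈ f.support, AddMonoidAlgebra.single (∑ v, τ v • g v) (coeff τ f) = 0 := by
    rw [← hf]
    conv_rhs => rw [← support_sum_monomial_coeff f]
    simp only [map_sum, map_monomial_of_map_X hπ]
  have hcoeff := congrArg (fun p : AddMonoidAlgebra K M => p.coeff (∑ v, σ v • g v)) hsum
  simp only [AddMonoidAlgebra.coeff_sum, AddMonoidAlgebra.coeff_single, AddMonoidAlgebra.coeff_zero,
    Finsupp.finsetSum_apply, Finsupp.coe_zero, Pi.zero_apply] at hcoeff
  rw [Finset.sum_eq_single σ (fun τ hτ hne => Finsupp.single_eq_of_ne (hcon τ hτ hne).symm)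
    (fun h => absurd hσ h), Finsupp.single_eq_same] at hcoeff
  exact mem_support_iff.mp hσ hcoeff

end Weight

lemma exists_grevlex_weight_eq_of_monomial_mem_initialIdeal {N : ℕ} {K M : Type*} [Field K]
    [AddCommMonoid M] {g : Fin N → M} {π : MvPolynomial (Fin N) K →ₐ[K] AddMonoidAlgebra K M}
    (hπ : ∀ v, π (X v) = AddMonoidAlgebra.of' K M (g v)) {w : Fin N →₀ ℕ}
    (hw : monomial w (1 : K) ∈ initialIdeal (RingHom.ker π.toRingHom)) :
    ∃ τ, grevlex τ w ∧ ∑ v, τ v • g v = ∑ v, w v • g v := by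
  have hgens : {p | ∃ f ∈ RingHom.ker π.toRingHom, ∃ σ, IsLeadMon f σ ∧ p = monomial σ (1 : K)}
      = (fun s => monomial s (1 : K)) '' {σ | ∃ f ∈ RingHom.ker π.toRingHom, IsLeadMon f σ} := by
    ext p
    constructor
    · rintro ⟨f, hf, σ, hlead, rfl⟩; exact ⟨σ, ⟨f, hf, hlead⟩, rfl⟩
    · rintro ⟨σ, ⟨f, hf, hlead⟩, rfl⟩; exact ⟨f, hf, σ, hlead, rfl⟩
  rw [initialIdeal, hgens, mem_ideal_span_monomial_image] at hw
  obtain ⟨σ, ⟨f, hf, hlead⟩, hσw⟩ :=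
    hw w (mem_support_iff.mpr (by rw [coeff_monomial, if_pos rfl]; exact one_ne_zero))
  obtain ⟨ρ, rfl⟩ := le_iff_exists_add.mp hσw
  obtain ⟨τ, hτ, hτσ, hweight⟩ := exists_ne_mem_support_weight_eq hπ hf hlead.1
  refine ⟨τ + ρ, grevlex_add_right ((hlead.2 τ hτ).resolve_left hτσ) ρ, ?_⟩
  simp only [Finsupp.add_apply, add_smul, Finset.sum_add_distrib, hweight]

section Simplicial

variable {c d α : ℕ} {a : Fin c → Fin d → ℕ} {B : AddSubmonoid (Fin d → ℕ)}

lemma valE_mem (hBgen : B = AddSubmonoid.closure (Set.range a ∪ Set.range (eVec d α)))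
    (σ : Fin (c + d) →₀ ℕ) : valE c d α a σ ∈ B := by
  subst hBgen
  refine AddSubmonoid.sum_mem _ fun v _ => AddSubmonoid.nsmul_mem _ ?_ _
  refine Fin.addCases (fun i => ?_) (fun j => ?_) v
  · rw [gens, Fin.addCases_left]
    exact AddSubmonoid.subset_closure (Or.inl ⟨i, rfl⟩)
  · rw [gens, Fin.addCases_right]
    exact AddSubmonoid.subset_closure (Or.inr ⟨j, rfl⟩)

lemma grevlex_of_monomial_mem_initialIdeal
    (hBgen : B = AddSubmonoid.closure (Set.range a ∪ Set.range (eVec d α)))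
    {m : (Fin d → ℕ) → (Fin (c + d) →₀ ℕ)}
    (hmmin : ∀ b ∈ B, ∀ σ, valE c d α a σ = b → m b = σ ∨ grevlex (m b) σ)
    {K : Type*} [Field K] {π : MvPolynomial (Fin (c + d)) K →ₐ[K] AddMonoidAlgebra K (Fin d → ℕ)}
    (hπ : ∀ v, π (X v) = AddMonoidAlgebra.of' K (Fin d → ℕ) (gens c d α a v))
    {w : Fin (c + d) →₀ ℕ} (hw : monomial w (1 : K) ∈ initialIdeal (RingHom.ker π.toRingHom)) :
    grevlex (m (valE c d α a w)) w := by
  obtain ⟨τ, hτw, hweight⟩ := exists_grevlex_weight_eq_of_monomial_mem_initialIdeal hπ hw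
  have hne : m (valE c d α a w) ≠ w := by
    intro hmw
    rcases hmmin _ (valE_mem hBgen w) τ hweight with h | h <;> rw [hmw] at h
    · exact grevlex_irrefl w (h ▸ hτw)
    · exact grevlex_asymm hτw h
  exact (hmmin _ (valE_mem hBgen w) w rfl).resolve_left hne

end Simplicial

end SimplicialToric

open SimplicialToric

theorem reduced_groebner_basis_general
    (c d α : ℕ)
    (a : Fin c → Fin d → ℕ) (B : AddSubmonoid (Fin d → ℕ))
    (hBgen : B = AddSubmonoid.closure (Set.range a ∪ Set.range (eVec d α)))
    (m : (Fin d → ℕ) → (Fin (c + d) →₀ ℕ))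
    (hmval : ∀ b ∈ B, valE c d α a (m b) = b)
    (hmmin : ∀ b ∈ B, ∀ σ, valE c d α a σ = b → m b = σ ∨ grevlex (m b) σ)
    (K : Type*) [Field K]
    (π : MvPolynomial (Fin (c + d)) K →ₐ[K] AddMonoidAlgebra K (Fin d → ℕ))
    (hπ : ∀ v, π (MvPolynomial.X v) = AddMonoidAlgebra.of' K (Fin d → ℕ) (gens c d α a v))
    (N0 : Set (Fin (c + d) →₀ ℕ))
    (hanti : ∀ n₁ ∈ N0, ∀ n₂ ∈ N0, n₁ ≠ n₂ → ¬ ∃ ρ, n₂ = n₁ + ρ)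
    (hN0gen : initialIdeal (RingHom.ker π.toRingHom)
      = Ideal.span ((fun n => MvPolynomial.monomial n (1 : K)) '' N0))
    (gfun : (Fin (c + d) →₀ ℕ) → MvPolynomial (Fin (c + d)) K)
    (hg : ∀ n, gfun n
      = MvPolynomial.monomial n (1 : K) - MvPolynomial.monomial (m (valE c d α a n)) (1 : K)) :
    (∀ n ∈ N0, gfun n ∈ RingHom.ker π.toRingHom) ∧
    (∀ n ∈ N0, IsLeadMon (gfun n) n ∧ MvPolynomial.coeff n (gfun n) = 1) ∧
    initialIdeal (RingHom.ker π.toRingHom)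
      = Ideal.span {h | ∃ n ∈ N0, ∃ σ, IsLeadMon (gfun n) σ ∧ h = MvPolynomial.monomial σ (1 : K)} ∧
    (∀ n ∈ N0, ∀ n' ∈ N0, n' ≠ n → ∀ σ ∈ (gfun n').support, ¬ ∃ ρ, σ = n + ρ) := by
  have hmem : ∀ n ∈ N0, MvPolynomial.monomial n (1 : K) ∈ initialIdeal (RingHom.ker π.toRingHom) :=
    fun n hn => hN0gen ▸ Ideal.subset_span ⟨n, hn, rfl⟩
  have hmin_lt : ∀ n ∈ N0, grevlex (m (valE c d α a n)) n := fun n hn =>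
    grevlex_of_monomial_mem_initialIdeal hBgen hmmin hπ (hmem n hn)
  have hlead : ∀ n ∈ N0, IsLeadMon (gfun n) n := fun n hn =>
    hg n ▸ isLeadMon_monomial_sub_monomial (hmin_lt n hn)
  refine ⟨fun n _ => ?ker, fun n hn => ⟨hlead n hn, ?coeff⟩, ?span, ?reduced⟩
  case ker =>
    change π (gfun n) = 0
    rw [hg, map_sub, map_monomial_of_map_X hπ, map_monomial_of_map_X hπ]
    exact sub_eq_zero.mpr (congrArg (AddMonoidAlgebra.single · 1)
      (hmval _ (valE_mem hBgen n)).symm)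
  case coeff => rw [hg, coeff_monomial_sub_monomial_self (hmin_lt n hn).ne]
  case span =>
    rw [hN0gen]
    congr 1
    ext p
    exact ⟨fun ⟨n, hn, hp⟩ => ⟨n, hn, n, hlead n hn, hp.symm⟩,
      fun ⟨n, hn, σ, hσ, hp⟩ => ⟨n, hn, by rw [hp, hσ.unique (hlead n hn)]⟩⟩
  case reduced =>
    rintro n hn n' hn' hne σ hσ ⟨ρ, rfl⟩
    rw [hg] at hσ
    rcases mem_support_monomial_sub_monomial 1 1 hσ with h | h
    · exact hanti n hn n' hn' hne.symm ⟨ρ, h.symm⟩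
    · have hlt := grevlex_of_monomial_mem_initialIdeal hBgen hmmin hπ
        (monomial_add_mem (hmem n hn) ρ)
      rw [h, hmval _ (valE_mem hBgen n')] at hlt
      exact grevlex_irrefl _ hlt

/-- For `N₀ ⊆ N₁ ∪ N₂` an antichain under divisibility generating
`in_≺(ker π)`, the binomials `g_n = n − m_b` (`b` the element of `B` represented by `n`)
form the reduced Gröbner basis of `ker π`. -/
theorem reduced_groebner_basis
    (c d α : ℕ) (hα : 0 < α)
    (a : Fin c → Fin d → ℕ) (B : AddSubmonoid (Fin d → ℕ))
    (hBgen : B = AddSubmonoid.closure (Set.range a ∪ Set.range (eVec d α)))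
    (hhilb : Hilb B = Set.range a ∪ Set.range (eVec d α))
    (hdeg : ∀ i, ∑ j, a i j = α)
    (m : (Fin d → ℕ) → (Fin (c + d) →₀ ℕ))
    (hmval : ∀ b ∈ B, valE c d α a (m b) = b)
    (hmmin : ∀ b ∈ B, ∀ σ, valE c d α a σ = b → m b = σ ∨ grevlex (m b) σ)
    (K : Type*) [Field K]
    (π : MvPolynomial (Fin (c + d)) K →ₐ[K] AddMonoidAlgebra K (Fin d → ℕ))
    (hπ : ∀ v, π (MvPolynomial.X v) = AddMonoidAlgebra.of' K (Fin d → ℕ) (gens c d α a v))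
    (N0 : Set (Fin (c + d) →₀ ℕ)) (hN0fin : N0.Finite)
    (hN0sub : N0 ⊆ N1set c d α a B m ∪ N2set c α B m)
    (hanti : ∀ n₁ ∈ N0, ∀ n₂ ∈ N0, n₁ ≠ n₂ → ¬ ∃ ρ, n₂ = n₁ + ρ)
    (hN0gen : initialIdeal (RingHom.ker π.toRingHom)
      = Ideal.span ((fun n => MvPolynomial.monomial n (1 : K)) '' N0))
    (gfun : (Fin (c + d) →₀ ℕ) → MvPolynomial (Fin (c + d)) K)
    (hg : ∀ n, gfun n
      = MvPolynomial.monomial n (1 : K) - MvPolynomial.monomial (m (valE c d α a n)) (1 : K)) :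
    (∀ n ∈ N0, gfun n ∈ RingHom.ker π.toRingHom) ∧
    (∀ n ∈ N0, IsLeadMon (gfun n) n ∧ MvPolynomial.coeff n (gfun n) = 1) ∧
    initialIdeal (RingHom.ker π.toRingHom)
      = Ideal.span {h | ∃ n ∈ N0, ∃ σ, IsLeadMon (gfun n) σ ∧ h = MvPolynomial.monomial σ (1 : K)} ∧
    (∀ n ∈ N0, ∀ n' ∈ N0, n' ≠ n → ∀ σ ∈ (gfun n').support, ¬ ∃ ρ, σ = n + ρ) :=
  reduced_groebner_basis_general c d α a B hBgen m hmval hmmin K π hπ N0 hanti hN0gen gfun hg
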